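/- Let N ≥ 3, b > N, and V(x) = 1/(1+|x|^b). Set g(x) = min(1, |x|^{1-N}) (the asymptotic profile of I₁V). Then there exists C > 0 such that for all |x| > 1, ∫_{ℝ^N} g(y)²/|x-y|^{N-1} dy ≤ C·|x|^{1-N}. -/

import Mathlib

/-!
Put `R = |x|/2`. On the ball `B(x, R)` one has `|y| ≥ R`, so `g(y)² ≤ R^{2-2N}`, and the kernel
`|x-y|^{1-N}` integrates to `N |B₁| R` there; this part is `≲ |x|^{3-2N} ≤ |x|^{1-N}`. Off the
ball the kernel is at most `R^{1-N}`, and `g² ∈ L¹` because `2(N-1) > N`; this part is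
`≲ |x|^{1-N} ∫ g²`. Both estimates come from the single pointwise bound
`f(y) |x-y|^{1-N} ≤ M 1_{B(0,R)}(x-y) |x-y|^{1-N} + R^{1-N} f(y)` for `f ≤ M` on `B(x, R)`.
-/

open MeasureTheory Real Set Metric Module

theorem min_one_rpow_le {t s : ℝ} (ht : 0 ≤ t) (hs : s ≤ 0) :
    min 1 (t ^ s) ≤ 2 ^ (-s) * (1 + t) ^ s := by
  rcases le_or_gt t 1 with ht1 | ht1
  · calc min 1 (t ^ s) ≤ 1 := min_le_left _ _
      _ = 2 ^ (-s) * 2 ^ s := by rw [← rpow_add two_pos, neg_add_cancel, rpow_zero]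
      _ ≤ 2 ^ (-s) * (1 + t) ^ s :=
          mul_le_mul_of_nonneg_left (rpow_le_rpow_of_nonpos (by positivity) (by linarith) hs)
            (by positivity)
  · calc min 1 (t ^ s) ≤ t ^ s := min_le_right _ _
      _ = 2 ^ (-s) * (2 * t) ^ s := by
          rw [mul_rpow two_pos.le ht, ← mul_assoc, ← rpow_add two_pos, neg_add_cancel, rpow_zero,
            one_mul]
      _ ≤ 2 ^ (-s) * (1 + t) ^ s :=
          mul_le_mul_of_nonneg_left (rpow_le_rpow_of_nonpos (by positivity) (by linarith) hs)
            (by positivity)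

section Haar

variable {E : Type*} [NormedAddCommGroup E] [NormedSpace ℝ E] [FiniteDimensional ℝ E]
  [MeasurableSpace E] [BorelSpace E] (μ : Measure E) [μ.IsAddHaarMeasure]

theorem integrableOn_ball_norm_rpow [Nontrivial E] {s : ℝ} (hs : -(finrank ℝ E : ℝ) < s)
    (R : ℝ) : IntegrableOn (fun z : E => ‖z‖ ^ s) (ball 0 R) μ :=
  integrableOn_ball_of_norm_le_rpow (C := 1) (α := -s) finrank_pos (by linarith)
    (ae_of_all _ fun z => by simp [abs_of_nonneg (rpow_nonneg (norm_nonneg z) s)])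
    (by fun_prop : Measurable fun z : E => ‖z‖ ^ s).aestronglyMeasurable

theorem setIntegral_ball_norm_rpow [Nontrivial E] {s : ℝ} (hs : -(finrank ℝ E : ℝ) < s)
    {R : ℝ} (hR : 0 ≤ R) :
    ∫ z in ball 0 R, ‖z‖ ^ s ∂μ =
      finrank ℝ E * μ.real (ball 0 1) * (R ^ (s + finrank ℝ E) / (s + finrank ℝ E)) := by
  have hradial : ∫ z in ball 0 R, ‖z‖ ^ s ∂μ = ∫ z, (Iio R).indicator (· ^ s) ‖z‖ ∂μ := by
    rw [← integral_indicator measurableSet_ball]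
    exact integral_congr_ae (ae_of_all _ fun z => by simp [indicator])
  have hshell : ∀ y ∈ Ioi (0 : ℝ),
      y ^ (finrank ℝ E - 1) • (Iio R).indicator (· ^ s) y =
        (Iio R).indicator (· ^ (s + finrank ℝ E - 1)) y := by
    intro y (hy : 0 < y)
    by_cases hyR : y ∈ Iio R
    · rw [indicator_of_mem hyR, indicator_of_mem hyR, smul_eq_mul, ← rpow_natCast,
        ← rpow_add hy, Nat.cast_sub finrank_pos, Nat.cast_one]
      ring_nf
    · rw [indicator_of_notMem hyR, indicator_of_notMem hyR, smul_zero]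
  rw [hradial, integral_fun_norm_addHaar μ, setIntegral_congr_fun measurableSet_Ioi hshell,
    setIntegral_indicator measurableSet_Iio, Ioi_inter_Iio, ← integral_Ioc_eq_integral_Ioo,
    ← intervalIntegral.integral_of_le hR, integral_rpow (Or.inl (by linarith)),
    sub_add_cancel, zero_rpow (by linarith), sub_zero, nsmul_eq_mul, smul_eq_mul, mul_assoc]

theorem integral_div_norm_sub_rpow_le [Nontrivial E] {f : E → ℝ} (hf : Integrable f μ)
    (hf0 : ∀ y, 0 ≤ f y) (x : E) {R M : ℝ} (hR : 0 < R) (hM : ∀ y ∈ ball x R, f y ≤ M) :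
    ∫ y, f y / ‖x - y‖ ^ ((finrank ℝ E : ℝ) - 1) ∂μ ≤
      M * (finrank ℝ E * μ.real (ball 0 1) * R) + R ^ (1 - (finrank ℝ E : ℝ)) * ∫ y, f y ∂μ := by
  set d : ℝ := (finrank ℝ E : ℝ)
  have hd : 1 ≤ d := Nat.one_le_cast.2 finrank_pos
  set k : E → ℝ := (ball 0 R).indicator (‖·‖ ^ (1 - d))
  have hk : Integrable k μ :=
    (integrable_indicator_iff measurableSet_ball).2 (integrableOn_ball_norm_rpow μ (by linarith) R)
  have hk_integral : ∫ z, k z ∂μ = d * μ.real (ball 0 1) * R := by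
    rw [integral_indicator measurableSet_ball, setIntegral_ball_norm_rpow μ (by linarith) hR.le,
      sub_add_cancel, rpow_one, div_one]
  have hpointwise : ∀ y, f y / ‖x - y‖ ^ (d - 1) ≤ M * k (x - y) + R ^ (1 - d) * f y := by
    intro y
    rw [div_eq_mul_inv, ← rpow_neg (norm_nonneg _), neg_sub]
    by_cases hy : y ∈ ball x R
    · have hk_near : k (x - y) = ‖x - y‖ ^ (1 - d) :=
        indicator_of_mem (mem_ball_zero_iff.2 (mem_ball_iff_norm'.1 hy)) _
      rw [hk_near]
      have := mul_le_mul_of_nonneg_right (hM y hy) (rpow_nonneg (norm_nonneg (x - y)) (1 - d))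
      nlinarith [mul_nonneg (rpow_nonneg hR.le (1 - d)) (hf0 y)]
    · have hxy : R ≤ ‖x - y‖ := not_lt.1 (mt mem_ball_iff_norm'.2 hy)
      have hk_far : k (x - y) = 0 := indicator_of_notMem (mt mem_ball_zero_iff.1 hxy.not_gt) _
      rw [hk_far, mul_zero, zero_add, mul_comm]
      exact mul_le_mul_of_nonneg_right (rpow_le_rpow_of_nonpos hR hxy (by linarith)) (hf0 y)
  have hk_shift : Integrable (fun y => k (x - y)) μ := hk.comp_sub_left x
  calc ∫ y, f y / ‖x - y‖ ^ (d - 1) ∂μ ≤ ∫ y, (M * k (x - y) + R ^ (1 - d) * f y) ∂μ :=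
        integral_mono_of_nonneg
          (ae_of_all _ fun y => div_nonneg (hf0 y) (rpow_nonneg (norm_nonneg _) _))
          ((hk_shift.const_mul M).add (hf.const_mul _)) (ae_of_all _ hpointwise)
    _ = _ := by
        rw [integral_add (hk_shift.const_mul M) (hf.const_mul _), integral_const_mul,
          integral_const_mul, integral_sub_left_eq_self k μ x, hk_integral]

theorem integrable_min_one_norm_rpow_sq {s : ℝ} (hs : 2 * s < -(finrank ℝ E : ℝ)) :
    Integrable (fun y : E => min 1 (‖y‖ ^ s) ^ 2) μ := by
  have hs0 : s ≤ 0 := by linarith [(finrank ℝ E).cast_nonneg (α := ℝ)]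
  have hdom := (integrable_one_add_norm (μ := μ) (r := -(2 * s)) (by linarith)).const_mul
    (((2 : ℝ) ^ (-s)) ^ 2)
  refine hdom.mono' (by fun_prop : Measurable fun y : E => min 1 (‖y‖ ^ s) ^ 2).aestronglyMeasurable
    (ae_of_all _ fun y => ?_)
  rw [norm_of_nonneg (sq_nonneg _), neg_neg]
  calc min 1 (‖y‖ ^ s) ^ 2 ≤ (2 ^ (-s) * (1 + ‖y‖) ^ s) ^ 2 :=
        pow_le_pow_left₀ (le_min zero_le_one (rpow_nonneg (norm_nonneg y) s))
          (min_one_rpow_le (norm_nonneg y) hs0) 2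
    _ = (2 ^ (-s)) ^ 2 * (1 + ‖y‖) ^ (2 * s) := by
        rw [mul_pow, ← rpow_natCast ((1 + ‖y‖) ^ s), ← rpow_mul (by positivity), Nat.cast_two,
          mul_comm s]

end Haar

theorem min_one_norm_rpow_le_of_mem_ball {E : Type*} [SeminormedAddCommGroup E] {d : ℝ}
    (hd : 1 ≤ d) {x y : E} (hy : y ∈ ball x (‖x‖ / 2)) :
    min 1 (‖y‖ ^ (1 - d)) ≤ (‖x‖ / 2) ^ (1 - d) := by
  have hxy := mem_ball_iff_norm'.1 hy
  have hR : 0 < ‖x‖ / 2 := (norm_nonneg _).trans_lt hxy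
  have hy_far : ‖x‖ / 2 ≤ ‖y‖ := by linarith [norm_sub_norm_le x y]
  exact (min_le_right _ _).trans (rpow_le_rpow_of_nonpos hR hy_far (by linarith))

theorem div_two_rpow_sq_mul_add_le {t d a b : ℝ} (ht : 1 ≤ t) (hd : 2 ≤ d) (ha : 0 ≤ a) :
    ((t / 2) ^ (1 - d)) ^ 2 * (a * (t / 2)) + (t / 2) ^ (1 - d) * b ≤
      (2 ^ (2 * d - 3) * a + 2 ^ (d - 1) * b) * t ^ (1 - d) := by
  have ht2 : 0 < t / 2 := by linarith
  have hdiv : ∀ p : ℝ, (t / 2) ^ p = 2 ^ (-p) * t ^ p := fun p => by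
    rw [div_rpow (by linarith) two_pos.le, div_eq_mul_inv, ← rpow_neg two_pos.le, mul_comm]
  have hsq : ((t / 2) ^ (1 - d)) ^ 2 * (t / 2) = (t / 2) ^ (3 - 2 * d) := by
    rw [← rpow_natCast, ← rpow_mul ht2.le, ← rpow_add_one ht2.ne']
    norm_num
    ring_nf
  calc ((t / 2) ^ (1 - d)) ^ 2 * (a * (t / 2)) + (t / 2) ^ (1 - d) * b
      = 2 ^ (2 * d - 3) * a * t ^ (3 - 2 * d) + 2 ^ (d - 1) * b * t ^ (1 - d) := by
        rw [mul_left_comm, hsq, hdiv, hdiv, neg_sub, neg_sub]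
        ring
    _ ≤ 2 ^ (2 * d - 3) * a * t ^ (1 - d) + 2 ^ (d - 1) * b * t ^ (1 - d) := by
        gcongr 2 ^ (2 * d - 3) * a * ?_ + _
        exact rpow_le_rpow_of_exponent_le ht (by linarith)
    _ = _ := by ring

theorem stmt5_general (N : ℕ) (hN : 3 ≤ N) :
    ∃ C : ℝ, 0 < C ∧
      ∀ x : EuclideanSpace ℝ (Fin N), 1 < ‖x‖ →
        (∫ y : EuclideanSpace ℝ (Fin N),
            (min 1 (‖y‖ ^ (1 - (N : ℝ)))) ^ 2 / ‖x - y‖ ^ ((N : ℝ) - 1)) ≤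
          C * ‖x‖ ^ (1 - (N : ℝ)) := by
  have hdim : finrank ℝ (EuclideanSpace ℝ (Fin N)) = N := finrank_euclideanSpace_fin
  have : Nontrivial (EuclideanSpace ℝ (Fin N)) := nontrivial_of_finrank_pos (by rw [hdim]; omega)
  have hN' : (3 : ℝ) ≤ N := by exact_mod_cast hN
  have hg_sq := integrable_min_one_norm_rpow_sq (E := EuclideanSpace ℝ (Fin N)) volume
    (s := 1 - N) (by rw [hdim]; linarith)
  set a : ℝ := N * volume.real (ball (0 : EuclideanSpace ℝ (Fin N)) 1)
  set K : ℝ := ∫ y : EuclideanSpace ℝ (Fin N), min 1 (‖y‖ ^ (1 - (N : ℝ))) ^ 2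
  have ha : 0 < a := mul_pos (by positivity)
    (ENNReal.toReal_pos (measure_ball_pos _ _ one_pos).ne' measure_ball_lt_top.ne)
  have hK : 0 ≤ K := integral_nonneg fun y => sq_nonneg _
  refine ⟨2 ^ (2 * (N : ℝ) - 3) * a + 2 ^ ((N : ℝ) - 1) * K, by positivity, fun x hx => ?_⟩
  have hsplit := integral_div_norm_sub_rpow_le volume hg_sq (fun y => sq_nonneg _) x
    (R := ‖x‖ / 2) (M := ((‖x‖ / 2) ^ (1 - (N : ℝ))) ^ 2) (by linarith) fun y hy =>
      pow_le_pow_left₀ (le_min zero_le_one (rpow_nonneg (norm_nonneg y) _))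
        (min_one_norm_rpow_le_of_mem_ball (by linarith) hy) 2
  rw [hdim] at hsplit
  exact hsplit.trans (div_two_rpow_sq_mul_add_le hx.le (by linarith) ha.le)

/-- For `N ≥ 3`, `b > N`, with `g(y) = min(1, |y|^(1-N))`, there is
`C > 0` such that `∫ g(y)²/|x-y|^(N-1) dy ≤ C·|x|^(1-N)` for all `|x| > 1`. -/
theorem stmt5 (N : ℕ) (hN : 3 ≤ N) (b : ℝ) (hb : (N : ℝ) < b) :
    ∃ C : ℝ, 0 < C ∧
      ∀ x : EuclideanSpace ℝ (Fin N), 1 < ‖x‖ →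
        (∫ y : EuclideanSpace ℝ (Fin N),
            (min 1 (‖y‖ ^ (1 - (N : ℝ)))) ^ 2 / ‖x - y‖ ^ ((N : ℝ) - 1)) ≤
          C * ‖x‖ ^ (1 - (N : ℝ)) :=
  stmt5_general N hN
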